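/- arXiv:0901.2372 — 4 statements merged into one kernel-verified Lean document; each statement's English description precedes it below -/
import Mathlib

section
/- In a weakly exact category, given a commutative 3×3 diagram with objects A₁,A₂,A₃ (first row), B₁,B₂,B₃ (second row), C₁,C₂,C₃ (third row), if all three rows are short exact and the first and second columns are short exact, then the third column A₃ → B₃ → C₃ is short exact. -/
open CategoryTheory CategoryTheory.Limits

universe v u

section Defs

variable {C : Type u} [Category.{v} C] [HasZeroMorphisms C]

/-- `i : K ⟶ A` is a kernel of `p : A ⟶ B`. -/
def IsKernelOf {K A B : C} (i : K ⟶ A) (p : A ⟶ B) : Prop :=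
  i ≫ p = 0 ∧ ∀ ⦃W : C⦄ (g : W ⟶ A), g ≫ p = 0 → ∃! h : W ⟶ K, h ≫ i = g

/-- `q : B ⟶ Q` is a cokernel of `i : A ⟶ B`. -/
def IsCokernelOf {A B Q : C} (q : B ⟶ Q) (i : A ⟶ B) : Prop :=
  i ≫ q = 0 ∧ ∀ ⦃W : C⦄ (g : B ⟶ W), i ≫ g = 0 → ∃! h : Q ⟶ W, q ≫ h = g

variable (D : MorphismProperty C)

/-- `A ⟶ B ⟶ Q` is a short exact sequence for the class of deflations `D`:
`p` is a deflation and `i` is a kernel of `p`. -/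
def IsShortExact {A B Q : C} (i : A ⟶ B) (p : B ⟶ Q) : Prop :=
  D p ∧ IsKernelOf i p

/-- An inflation is a kernel of some deflation. -/
def IsInflation {A B : C} (i : A ⟶ B) : Prop :=
  ∃ (Q : C) (p : B ⟶ Q), D p ∧ IsKernelOf i p

/-- The axioms for a weakly exact category: `D` is the class of deflations.
Axiom (0): isomorphisms and morphisms to a zero object are deflations;
Axiom (1): a deflation has a kernel and is a cokernel of its kernel;
Axiom (2): deflations are closed under composition;
Axiom (3): if `g ∘ f` and `f` are deflations then so is `g`;
Axiom (4): the 3×3 lemma. -/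
structure IsWeaklyExact : Prop where
  defl_of_isIso : ∀ ⦃X Y : C⦄ (f : X ⟶ Y), IsIso f → D f
  defl_to_zero : ∀ ⦃X Y : C⦄ (f : X ⟶ Y), IsZero Y → D f
  defl_kernel : ∀ ⦃X Y : C⦄ (p : X ⟶ Y), D p →
    ∃ (K : C) (i : K ⟶ X), IsKernelOf i p ∧ IsCokernelOf p i
  defl_comp : ∀ ⦃X Y Z : C⦄ (f : X ⟶ Y) (g : Y ⟶ Z), D f → D g → D (f ≫ g)
  defl_cancel : ∀ ⦃X Y Z : C⦄ (f : X ⟶ Y) (g : Y ⟶ Z), D (f ≫ g) → D f → D g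
  three_by_three : ∀ ⦃A₁ A₂ A₃ B₁ B₂ B₃ C₁ C₂ C₃ : C⦄
    (a₁ : A₁ ⟶ A₂) (a₂ : A₂ ⟶ A₃) (b₁ : B₁ ⟶ B₂) (b₂ : B₂ ⟶ B₃)
    (c₁ : C₁ ⟶ C₂) (c₂ : C₂ ⟶ C₃)
    (f₁ : A₁ ⟶ B₁) (f₂ : A₂ ⟶ B₂) (f₃ : A₃ ⟶ B₃)
    (g₁ : B₁ ⟶ C₁) (g₂ : B₂ ⟶ C₂) (g₃ : B₃ ⟶ C₃),
    a₁ ≫ f₂ = f₁ ≫ b₁ → a₂ ≫ f₃ = f₂ ≫ b₂ →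
    b₁ ≫ g₂ = g₁ ≫ c₁ → b₂ ≫ g₃ = g₂ ≫ c₂ →
    IsShortExact D f₁ g₁ → IsShortExact D f₂ g₂ → IsShortExact D f₃ g₃ →
    IsShortExact D b₁ b₂ → IsShortExact D c₁ c₂ →
    IsShortExact D a₁ a₂

end Defs

section Aux

variable {C : Type u} [Category.{v} C] [HasZeroMorphisms C] {D : MorphismProperty C}

/-- Deflations are epimorphisms (cancellation form). -/
lemma defl_epi (hD : IsWeaklyExact D) {X Y : C} {p : X ⟶ Y} (hp : D p)
    {W : C} {u v : Y ⟶ W} (h : p ≫ u = p ≫ v) : u = v := by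
  obtain ⟨K, i, hi, hc⟩ := hD.defl_kernel p hp
  have h0 : i ≫ p ≫ v = 0 := by rw [← Category.assoc, hi.1, zero_comp]
  obtain ⟨w, hw, huniq⟩ := hc.2 (p ≫ v) h0
  exact (huniq u h).trans (huniq v rfl).symm

/-- A deflation is a cokernel of *any* of its kernels. -/
lemma cokernel_of_any_kernel {K K' X Y : C} {p : X ⟶ Y} {i : K ⟶ X} {i' : K' ⟶ X}
    (hi : IsKernelOf i p) (hi' : IsKernelOf i' p) (hc : IsCokernelOf p i') :
    IsCokernelOf p i := by
  refine ⟨hi.1, fun W g hg => ?_⟩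
  obtain ⟨w, hw, -⟩ := hi.2 i' hi'.1
  exact hc.2 g (by rw [← hw, Category.assoc, hg, comp_zero])

end Aux

/-- **Lemma 2.2** (the dual form of the 3×3 axiom).  In a weakly exact
category, given a commutative 3×3 diagram in which all three rows are short
exact and the first and second columns are short exact, the third column
`A₃ ⟶ B₃ ⟶ C₃` is short exact. -/
theorem dual_three_by_three {C : Type u} [Category.{v} C] [HasZeroMorphisms C]
    [HasZeroObject C] (D : MorphismProperty C) (hD : IsWeaklyExact D)
    {A₁ A₂ A₃ B₁ B₂ B₃ C₁ C₂ C₃ : C}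
    (a₁ : A₁ ⟶ A₂) (a₂ : A₂ ⟶ A₃) (b₁ : B₁ ⟶ B₂) (b₂ : B₂ ⟶ B₃)
    (c₁ : C₁ ⟶ C₂) (c₂ : C₂ ⟶ C₃)
    (f₁ : A₁ ⟶ B₁) (f₂ : A₂ ⟶ B₂) (f₃ : A₃ ⟶ B₃)
    (g₁ : B₁ ⟶ C₁) (g₂ : B₂ ⟶ C₂) (g₃ : B₃ ⟶ C₃)
    (sq₁ : a₁ ≫ f₂ = f₁ ≫ b₁) (sq₂ : a₂ ≫ f₃ = f₂ ≫ b₂)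
    (sq₃ : b₁ ≫ g₂ = g₁ ≫ c₁) (sq₄ : b₂ ≫ g₃ = g₂ ≫ c₂)
    (hrow₁ : IsShortExact D a₁ a₂) (hrow₂ : IsShortExact D b₁ b₂)
    (hrow₃ : IsShortExact D c₁ c₂)
    (hcol₁ : IsShortExact D f₁ g₁) (hcol₂ : IsShortExact D f₂ g₂) :
    IsShortExact D f₃ g₃ := by
  -- g₃ is a deflation
  have hg₃ : D g₃ := by
    refine hD.defl_cancel b₂ g₃ ?_ hrow₂.1
    rw [sq₄]
    exact hD.defl_comp g₂ c₂ hcol₂.1 hrow₃.1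
  -- f₃ ≫ g₃ = 0, by cancelling the epi a₂
  have hzero : f₃ ≫ g₃ = 0 := by
    refine defl_epi hD hrow₁.1 ?_
    rw [comp_zero, ← Category.assoc, sq₂, Category.assoc, sq₄, ← Category.assoc,
      hcol₂.2.1, zero_comp]
  -- a kernel of g₃
  obtain ⟨K, k, hk, hck⟩ := hD.defl_kernel g₃ hg₃
  -- factor f₃ = u ≫ k
  obtain ⟨u, hu, huuniq⟩ := hk.2 f₃ hzero
  -- apply the 3×3 axiom with third column K → B₃ → C₃
  have hrow₁' : IsShortExact D a₁ (a₂ ≫ u) :=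
    hD.three_by_three a₁ (a₂ ≫ u) b₁ b₂ c₁ c₂ f₁ f₂ k g₁ g₂ g₃
      sq₁ (by rw [Category.assoc, hu, sq₂]) sq₃ sq₄
      hcol₁ hcol₂ ⟨hg₃, hk⟩ hrow₂ hrow₃
  -- a₂ ≫ u is a cokernel of its kernel a₁
  obtain ⟨K', i', hi', hck'⟩ := hD.defl_kernel (a₂ ≫ u) hrow₁'.1
  have hcoka : IsCokernelOf (a₂ ≫ u) a₁ :=
    cokernel_of_any_kernel hrow₁'.2 hi' hck'
  -- factor a₂ through a₂ ≫ u : get v with (a₂ ≫ u) ≫ v = a₂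
  obtain ⟨v, hv, -⟩ := hcoka.2 a₂ hrow₁.2.1
  have huv : u ≫ v = 𝟙 A₃ := by
    refine defl_epi hD hrow₁.1 ?_
    rw [Category.comp_id, ← Category.assoc, hv]
  have hvu : v ≫ u = 𝟙 K := by
    refine defl_epi hD hrow₁'.1 ?_
    rw [Category.comp_id, ← Category.assoc, hv]
  -- conclude: f₃ = u ≫ k with u iso, so f₃ is a kernel of g₃
  refine ⟨hg₃, hzero, fun W g hg => ?_⟩
  obtain ⟨h', hh', hh'uniq⟩ := hk.2 g hg
  refine ⟨h' ≫ v, ?_, ?_⟩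
  · show (h' ≫ v) ≫ f₃ = g
    rw [← hu, ← Category.assoc, Category.assoc h' v u, hvu, Category.comp_id, hh']
  · intro y hy
    have : y ≫ u = h' := hh'uniq (y ≫ u) (by show (y ≫ u) ≫ k = g; rw [Category.assoc, hu, hy])
    rw [← this, Category.assoc, huv, Category.comp_id]
end

section
/- (Snake lemma) In a weakly exact category, given a commutative diagram with short exact rows A₁ →^{φ₁} A₂ →^{φ₂} A₃ and B₁ →^{φ₁'} B₂ →^{φ₂'} B₃ and vertical morphisms f₁, f₂, f₃ each of which is admissible, i.e. fᵢ factors as a deflation fᵢ' : Aᵢ → Iᵢ with kernel kᵢ : Kᵢ → Aᵢ followed by an inflation fᵢ'' : Iᵢ → Bᵢ with cokernel cᵢ : Bᵢ → Cᵢ, there is a connecting morphism δ : K₃ → C₁ such that the sequence K₁ →^{ψ₁} K₂ →^{ψ₂} K₃ →^{δ} C₁ →^{ψ₁'} C₂ →^{ψ₂'} C₃ is exact, where ψᵢ and ψᵢ' are the morphisms induced by φᵢ and φᵢ' via the universal properties of kernel and cokernel; moreover ψ₁ is an inflation and ψ₂' is a deflation. -/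
open CategoryTheory CategoryTheory.Limits

universe v u

section ExactSix

variable {C : Type u} [Category.{v} C] [HasZeroMorphisms C] (D : MorphismProperty C)

/-- Exactness (in the sense of Definition 1.1 of the paper, including the
conditions at both ends) of a six-term sequence
`X₁ ⟶ X₂ ⟶ X₃ ⟶ X₄ ⟶ X₅ ⟶ X₆`: every morphism factors as
`Xᵢ ⟶ Zᵢ₊₁ ⟶ Xᵢ₊₁` such that each `Zᵢ ⟶ Xᵢ ⟶ Zᵢ₊₁` is short exact. -/
def ExactSix {X₁ X₂ X₃ X₄ X₅ X₆ : C}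
    (g₁ : X₁ ⟶ X₂) (g₂ : X₂ ⟶ X₃) (g₃ : X₃ ⟶ X₄) (g₄ : X₄ ⟶ X₅) (g₅ : X₅ ⟶ X₆) : Prop :=
  ∃ (Z₁ Z₂ Z₃ Z₄ Z₅ Z₆ Z₇ : C)
    (ι₁ : Z₁ ⟶ X₁) (ι₂ : Z₂ ⟶ X₂) (ι₃ : Z₃ ⟶ X₃) (ι₄ : Z₄ ⟶ X₄) (ι₅ : Z₅ ⟶ X₅)
    (ι₆ : Z₆ ⟶ X₆)
    (π₁ : X₁ ⟶ Z₂) (π₂ : X₂ ⟶ Z₃) (π₃ : X₃ ⟶ Z₄) (π₄ : X₄ ⟶ Z₅) (π₅ : X₅ ⟶ Z₆)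
    (π₆ : X₆ ⟶ Z₇),
    g₁ = π₁ ≫ ι₂ ∧ g₂ = π₂ ≫ ι₃ ∧ g₃ = π₃ ≫ ι₄ ∧ g₄ = π₄ ≫ ι₅ ∧ g₅ = π₅ ≫ ι₆ ∧
    IsShortExact D ι₁ π₁ ∧ IsShortExact D ι₂ π₂ ∧ IsShortExact D ι₃ π₃ ∧
    IsShortExact D ι₄ π₄ ∧ IsShortExact D ι₅ π₅ ∧ IsShortExact D ι₆ π₆

end ExactSix


section SnakeHelpers

open ZeroObject

variable {C : Type u} [Category.{v} C] [HasZeroMorphisms C]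

theorem IsKernelOf.mono' {K A B : C} {i : K ⟶ A} {p : A ⟶ B} (h : IsKernelOf i p) :
    Mono i := by
  constructor
  intro W u v huv
  obtain ⟨w, -, hw⟩ := h.2 (v ≫ i) (by rw [Category.assoc, h.1, comp_zero])
  rw [hw u huv, hw v rfl]

theorem IsCokernelOf.epi' {A B Q : C} {q : B ⟶ Q} {i : A ⟶ B} (h : IsCokernelOf q i) :
    Epi q := by
  constructor
  intro W u v huv
  obtain ⟨w, -, hw⟩ := h.2 (q ≫ v) (by rw [← Category.assoc, h.1, zero_comp])
  rw [hw u huv, hw v rfl]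

variable {D : MorphismProperty C}

theorem IsWeaklyExact.epi_of_defl (hD : IsWeaklyExact D) {A B : C} {p : A ⟶ B} (hp : D p) :
    Epi p := by
  obtain ⟨K, i, -, hc⟩ := hD.defl_kernel p hp
  exact hc.epi'

theorem IsWeaklyExact.coker_of_defl (hD : IsWeaklyExact D) {K A B : C} {p : A ⟶ B}
    {i : K ⟶ A} (hp : D p) (hi : IsKernelOf i p) : IsCokernelOf p i := by
  obtain ⟨K₀, i₀, hk₀, hc₀⟩ := hD.defl_kernel p hp
  obtain ⟨v, hv, -⟩ := hi.2 i₀ hk₀.1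
  refine ⟨hi.1, fun W g hg => hc₀.2 g ?_⟩
  rw [← hv, Category.assoc, hg, comp_zero]

variable [HasZeroObject C]

theorem IsWeaklyExact.ses_zero_id (hD : IsWeaklyExact D) (X : C) :
    IsShortExact D (0 : (0 : C) ⟶ X) (𝟙 X) := by
  refine ⟨hD.defl_of_isIso _ inferInstance, zero_comp, fun W g hg => ?_⟩
  exact ⟨0, by show (0 : W ⟶ (0 : C)) ≫ _ = g; rw [zero_comp, ← hg, Category.comp_id],
    fun h _ => (isZero_zero C).eq_of_tgt h 0⟩

theorem IsWeaklyExact.ses_id_zero (hD : IsWeaklyExact D) (X : C) :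
    IsShortExact D (𝟙 X) (0 : X ⟶ (0 : C)) := by
  refine ⟨hD.defl_to_zero _ (isZero_zero C), comp_zero, fun W g _ => ?_⟩
  exact ⟨g, Category.comp_id g, fun h hh => by rw [← hh, Category.comp_id]⟩

theorem IsWeaklyExact.ses_of_inflation_coker (hD : IsWeaklyExact D) {I B Q : C}
    {f : I ⟶ B} {c : B ⟶ Q} (hf : IsInflation D f) (hc : IsCokernelOf c f) :
    IsShortExact D f c := by
  obtain ⟨Q₀, p, hp, hker⟩ := hf
  have hpc : IsCokernelOf p f := hD.coker_of_defl hp hker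
  obtain ⟨u, hu, -⟩ := hpc.2 c hc.1
  obtain ⟨v, hv, -⟩ := hc.2 p hpc.1
  have huv : u ≫ v = 𝟙 _ := by
    obtain ⟨w, -, hw⟩ := hpc.2 p hpc.1
    rw [hw (u ≫ v) (by show p ≫ u ≫ v = p; rw [← Category.assoc, hu, hv]),
      hw (𝟙 _) (Category.comp_id p)]
  have hvu : v ≫ u = 𝟙 _ := by
    obtain ⟨w, -, hw⟩ := hc.2 c hc.1
    rw [hw (v ≫ u) (by show c ≫ v ≫ u = c; rw [← Category.assoc, hv, hu]),
      hw (𝟙 _) (Category.comp_id c)]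
  have hiso : IsIso u := ⟨v, huv, hvu⟩
  refine ⟨?_, hc.1, fun W g hg => hker.2 g ?_⟩
  · rw [← hu]; exact hD.defl_comp p u hp (hD.defl_of_isIso u hiso)
  · rw [← hv, ← Category.assoc, hg, zero_comp]

/-- The pullback of a deflation along an inflation, realized as a kernel:
given deflations `p : B ⟶ Cc` and `r : Cc ⟶ R` with composite `q`, kernels
`i` of `p`, `m` of `r`, `e : E ⟶ B` of `q`, the induced `E ⟶ M` is a
deflation with kernel the induced `Kp ⟶ E`. -/
theorem IsWeaklyExact.pb (hD : IsWeaklyExact D) {Kp B Cc R M E : C}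
    {p : B ⟶ Cc} {r : Cc ⟶ R} {q : B ⟶ R}
    (hp : D p) (hr : D r) (hq : p ≫ r = q)
    {i : Kp ⟶ B} (hi : IsKernelOf i p) {m : M ⟶ Cc} (hm : IsKernelOf m r)
    {e : E ⟶ B} (he : IsKernelOf e q) :
    ∃ (l : Kp ⟶ E) (t : E ⟶ M), l ≫ e = i ∧ t ≫ m = e ≫ p ∧ IsShortExact D l t := by
  have hqD : D q := hq ▸ hD.defl_comp p r hp hr
  obtain ⟨l, hl, -⟩ := he.2 i (by rw [← hq, ← Category.assoc, hi.1, zero_comp])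
  obtain ⟨t, ht, -⟩ := hm.2 (e ≫ p) (by rw [Category.assoc, hq, he.1])
  refine ⟨l, t, hl, ht, ?_⟩
  refine hD.three_by_three l t i p (0 : (0 : C) ⟶ R) (𝟙 R)
    (𝟙 Kp) e m (0 : Kp ⟶ (0 : C)) q r
    (by rw [hl, Category.id_comp]) (by rw [ht])
    (by rw [← hq, ← Category.assoc, hi.1, zero_comp, zero_comp])
    (by rw [hq, Category.comp_id])
    (hD.ses_id_zero Kp) ⟨hqD, he⟩ ⟨hr, hm⟩ ⟨hp, hi⟩ (hD.ses_zero_id R)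

end SnakeHelpers

open ZeroObject

/-- **The snake lemma** (Theorem 3.1) in a weakly exact category.  Given a
commutative diagram with short exact rows and admissible vertical morphisms
`fᵢ = fᵢ'' ∘ fᵢ'` (deflation `fᵢ'` with kernel `kᵢ` followed by inflation
`fᵢ''` with cokernel `cᵢ`), there is a connecting morphism `δ : K₃ ⟶ C₁`
making `K₁ ⟶ K₂ ⟶ K₃ ⟶ C₁ ⟶ C₂ ⟶ C₃` exact; moreover `ψ₁` is an inflation
and `ψ₂'` is a deflation. -/
theorem snake_lemma {C : Type u} [Category.{v} C] [HasZeroMorphisms C]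
    [HasZeroObject C] (D : MorphismProperty C) (hD : IsWeaklyExact D)
    {A₁ A₂ A₃ B₁ B₂ B₃ I₁ I₂ I₃ K₁ K₂ K₃ C₁ C₂ C₃ : C}
    (φ₁ : A₁ ⟶ A₂) (φ₂ : A₂ ⟶ A₃) (φ₁' : B₁ ⟶ B₂) (φ₂' : B₂ ⟶ B₃)
    (f₁' : A₁ ⟶ I₁) (f₁'' : I₁ ⟶ B₁) (f₂' : A₂ ⟶ I₂) (f₂'' : I₂ ⟶ B₂)
    (f₃' : A₃ ⟶ I₃) (f₃'' : I₃ ⟶ B₃)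
    (k₁ : K₁ ⟶ A₁) (k₂ : K₂ ⟶ A₂) (k₃ : K₃ ⟶ A₃)
    (c₁ : B₁ ⟶ C₁) (c₂ : B₂ ⟶ C₂) (c₃ : B₃ ⟶ C₃)
    (hrow₁ : IsShortExact D φ₁ φ₂) (hrow₂ : IsShortExact D φ₁' φ₂')
    (hsq₁ : φ₁ ≫ (f₂' ≫ f₂'') = (f₁' ≫ f₁'') ≫ φ₁')
    (hsq₂ : φ₂ ≫ (f₃' ≫ f₃'') = (f₂' ≫ f₂'') ≫ φ₂')
    (hf₁' : D f₁') (hf₂' : D f₂') (hf₃' : D f₃')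
    (hk₁ : IsKernelOf k₁ f₁') (hk₂ : IsKernelOf k₂ f₂') (hk₃ : IsKernelOf k₃ f₃')
    (hf₁'' : IsInflation D f₁'') (hf₂'' : IsInflation D f₂'') (hf₃'' : IsInflation D f₃'')
    (hc₁ : IsCokernelOf c₁ f₁'') (hc₂ : IsCokernelOf c₂ f₂'') (hc₃ : IsCokernelOf c₃ f₃'')
    (ψ₁ : K₁ ⟶ K₂) (hψ₁ : ψ₁ ≫ k₂ = k₁ ≫ φ₁)
    (ψ₂ : K₂ ⟶ K₃) (hψ₂ : ψ₂ ≫ k₃ = k₂ ≫ φ₂)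
    (ψ₁' : C₁ ⟶ C₂) (hψ₁' : c₁ ≫ ψ₁' = φ₁' ≫ c₂)
    (ψ₂' : C₂ ⟶ C₃) (hψ₂' : c₂ ≫ ψ₂' = φ₂' ≫ c₃) :
    ∃ δ : K₃ ⟶ C₁,
      ExactSix D ψ₁ ψ₂ δ ψ₁' ψ₂' ∧ IsInflation D ψ₁ ∧ D ψ₂' := by
  obtain ⟨hφ₂D, hφ₁ker⟩ := hrow₁
  obtain ⟨hφ₂'D, hφ₁'ker⟩ := hrow₂
  haveI : Epi f₁' := hD.epi_of_defl hf₁'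
  haveI : Epi f₂' := hD.epi_of_defl hf₂'
  haveI : Mono φ₁' := hφ₁'ker.mono'
  haveI : Mono k₃ := hk₃.mono'
  have hf₂''mono : Mono f₂'' := by obtain ⟨_, p, -, hker⟩ := hf₂''; exact hker.mono'
  have hf₃''mono : Mono f₃'' := by obtain ⟨_, p, -, hker⟩ := hf₃''; exact hker.mono'
  -- short exact sequences I_i → B_i → C_i
  have hse₁ : IsShortExact D f₁'' c₁ := hD.ses_of_inflation_coker hf₁'' hc₁
  have hse₂ : IsShortExact D f₂'' c₂ := hD.ses_of_inflation_coker hf₂'' hc₂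
  have hse₃ : IsShortExact D f₃'' c₃ := hD.ses_of_inflation_coker hf₃'' hc₃
  haveI : Epi c₁ := hD.epi_of_defl hse₁.1
  -- induced maps θ₁ : I₁ ⟶ I₂, θ₂ : I₂ ⟶ I₃
  have hf₁'cok : IsCokernelOf f₁' k₁ := hD.coker_of_defl hf₁' hk₁
  have hf₂'cok : IsCokernelOf f₂' k₂ := hD.coker_of_defl hf₂' hk₂
  obtain ⟨θ₁, hθ₁, -⟩ := hf₁'cok.2 (φ₁ ≫ f₂')
    (by rw [← Category.assoc, ← hψ₁, Category.assoc, hk₂.1, comp_zero])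
  obtain ⟨θ₂, hθ₂, -⟩ := hf₂'cok.2 (φ₂ ≫ f₃')
    (by rw [← Category.assoc, ← hψ₂, Category.assoc, hk₃.1, comp_zero])
  have hθ₁f : θ₁ ≫ f₂'' = f₁'' ≫ φ₁' := by
    apply (cancel_epi f₁').mp
    rw [← Category.assoc, hθ₁, Category.assoc, hsq₁, Category.assoc]
  have hθ₂f : θ₂ ≫ f₃'' = f₂'' ≫ φ₂' := by
    apply (cancel_epi f₂').mp
    rw [← Category.assoc, hθ₂, Category.assoc, hsq₂, Category.assoc]
  have hθ₂D : D θ₂ := hD.defl_cancel f₂' θ₂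
    (by rw [hθ₂]; exact hD.defl_comp _ _ hφ₂D hf₃') hf₂'
  -- S := ker θ₂
  obtain ⟨S, s, hs, -⟩ := hD.defl_kernel θ₂ hθ₂D
  haveI : Mono s := hs.mono'
  -- P := ker (φ₂ ≫ f₃')
  have hqD : D (φ₂ ≫ f₃') := hD.defl_comp _ _ hφ₂D hf₃'
  obtain ⟨P, j, hj, -⟩ := hD.defl_kernel (φ₂ ≫ f₃') hqD
  haveI : Mono j := hj.mono'
  -- pullback structure on P, twice
  obtain ⟨lam, prj, hlamj, hprjk, hselp⟩ := hD.pb hφ₂D hf₃' rfl hφ₁ker hk₃ hj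
  obtain ⟨kap, sgm, hkapj, hsgms, hseκσ⟩ := hD.pb hf₂' hθ₂D hθ₂ hk₂ hs hj
  haveI : Epi prj := hD.epi_of_defl hselp.1
  -- ψ₂' is a deflation; Z₅ := ker ψ₂'
  have hψ₂'D : D ψ₂' := hD.defl_cancel c₂ ψ₂'
    (by rw [hψ₂']; exact hD.defl_comp _ _ hφ₂'D hse₃.1) hse₂.1
  obtain ⟨Z₅, io₅, hio₅, -⟩ := hD.defl_kernel ψ₂' hψ₂'D
  haveI : Mono io₅ := hio₅.mono'
  -- π₄ : C₁ ⟶ Z₅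
  have hψψ : ψ₁' ≫ ψ₂' = 0 := by
    apply (cancel_epi c₁).mp
    rw [comp_zero, ← Category.assoc, hψ₁', Category.assoc, hψ₂', ← Category.assoc,
      hφ₁'ker.1, zero_comp]
  obtain ⟨pi₄, hpi₄, -⟩ := hio₅.2 ψ₁' hψψ
  -- r : S ⟶ B₁
  obtain ⟨rS, hrS, -⟩ := hφ₁'ker.2 (s ≫ f₂'')
    (by rw [Category.assoc, ← hθ₂f, ← Category.assoc, hs.1, zero_comp])
  -- the ρ-grid : S → B₁ → Z₅ is short exact
  have hseρ : IsShortExact D rS (c₁ ≫ pi₄) := by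
    refine hD.three_by_three rS (c₁ ≫ pi₄) f₂'' c₂ f₃'' c₃
      s φ₁' io₅ θ₂ φ₂' ψ₂' hrS ?_ hθ₂f.symm hψ₂' ⟨hθ₂D, hs⟩ ⟨hφ₂'D, hφ₁'ker⟩
      ⟨hψ₂'D, hio₅⟩ hse₂ hse₃
    rw [Category.assoc, hpi₄, hψ₁']
  have hpi₄D : D pi₄ := hD.defl_cancel c₁ pi₄ hseρ.1 hse₁.1
  -- Z₄ := ker π₄
  obtain ⟨Z₄, io₄, hio₄, -⟩ := hD.defl_kernel pi₄ hpi₄D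
  haveI : Mono io₄ := hio₄.mono'
  -- n' : S ⟶ Z₄
  obtain ⟨n', hn', -⟩ := hio₄.2 (rS ≫ c₁) (by rw [Category.assoc, hseρ.2.1])
  -- θ₁' : I₁ ⟶ S
  have hθθ : θ₁ ≫ θ₂ = 0 := by
    apply (cancel_epi f₁').mp
    rw [comp_zero, ← Category.assoc, hθ₁, Category.assoc, hθ₂, ← Category.assoc,
      hφ₁ker.1, zero_comp]
  obtain ⟨th₁', hth₁', -⟩ := hs.2 θ₁ hθθ
  have hth₁'r : th₁' ≫ rS = f₁'' := by
    apply (cancel_mono φ₁').mp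
    rw [Category.assoc, hrS, ← Category.assoc, hth₁', hθ₁f]
  -- the θ₁'-grid : I₁ → S → Z₄ is short exact
  have hseθ : IsShortExact D th₁' n' := by
    refine hD.three_by_three th₁' n' f₁'' c₁ (0 : (0 : C) ⟶ Z₅) (𝟙 Z₅)
      (𝟙 I₁) rS io₄ (0 : I₁ ⟶ (0 : C)) (c₁ ≫ pi₄) pi₄
      (by rw [hth₁'r, Category.id_comp]) hn'
      (by rw [← Category.assoc, hse₁.2.1, zero_comp, zero_comp])
      (by rw [Category.comp_id])
      (hD.ses_id_zero I₁) hseρ ⟨hpi₄D, hio₄⟩ hse₁ (hD.ses_zero_id Z₅)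
  -- π₃ : K₃ ⟶ Z₄
  have hlamsgm : lam ≫ sgm = f₁' ≫ th₁' := by
    apply (cancel_mono s).mp
    rw [Category.assoc, hsgms, ← Category.assoc, hlamj, Category.assoc, hth₁', hθ₁]
  have hprjcok : IsCokernelOf prj lam := hD.coker_of_defl hselp.1 hselp.2
  obtain ⟨pi₃, hpi₃, -⟩ := hprjcok.2 (sgm ≫ n')
    (by rw [← Category.assoc, hlamsgm, Category.assoc, hseθ.2.1, comp_zero])
  have hpi₃D : D pi₃ := hD.defl_cancel prj pi₃
    (by rw [hpi₃]; exact hD.defl_comp _ _ hseκσ.1 hseθ.1) hselp.1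
  -- Z₃ := ker π₃
  obtain ⟨Z₃, io₃, hio₃, -⟩ := hD.defl_kernel pi₃ hpi₃D
  -- π₂ : K₂ ⟶ Z₃
  have hκπ : kap ≫ prj = ψ₂ := by
    apply (cancel_mono k₃).mp
    rw [Category.assoc, hprjk, ← Category.assoc, hkapj, hψ₂]
  obtain ⟨pi₂, hpi₂, -⟩ := hio₃.2 ψ₂
    (by rw [← hκπ, Category.assoc, hpi₃, ← Category.assoc, hseκσ.2.1, zero_comp])
  have hψ₁κ : ψ₁ ≫ kap = k₁ ≫ lam := by
    apply (cancel_mono j).mp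
    rw [Category.assoc, hkapj, hψ₁, Category.assoc, hlamj]
  -- the ψ₁-grid : K₁ → K₂ → Z₃ is short exact
  have hseψ₁ : IsShortExact D ψ₁ pi₂ :=
    hD.three_by_three ψ₁ pi₂ lam prj th₁' n' k₁ kap io₃ f₁' sgm pi₃
      hψ₁κ (by rw [hpi₂, hκπ]) hlamsgm hpi₃
      ⟨hf₁', hk₁⟩ hseκσ ⟨hpi₃D, hio₃⟩ hselp hseθ
  -- assemble
  refine ⟨pi₃ ≫ io₄, ?_, ⟨Z₃, pi₂, hseψ₁.1, hseψ₁.2⟩, hψ₂'D⟩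
  exact ⟨0, K₁, Z₃, Z₄, Z₅, C₃, 0,
    0, ψ₁, io₃, io₄, io₅, 𝟙 C₃,
    𝟙 K₁, pi₂, pi₃, pi₄, ψ₂', 0,
    (Category.id_comp ψ₁).symm, hpi₂.symm, rfl, hpi₄.symm, (Category.comp_id ψ₂').symm,
    hD.ses_zero_id K₁, hseψ₁, ⟨hpi₃D, hio₃⟩, ⟨hpi₄D, hio₄⟩, ⟨hψ₂'D, hio₅⟩,
    hD.ses_id_zero C₃⟩
end

section
/- In a weakly exact category, let f : A → B and g : B → C be two morphisms. If the composite g∘f and g are both inflations, then f is an inflation. -/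
open CategoryTheory CategoryTheory.Limits

universe v u

section Aux

open ZeroObject

variable {C : Type u} [Category.{v} C] [HasZeroMorphisms C]

lemma isKernelOf_id_to_zero [HasZeroObject C] (A : C) :
    IsKernelOf (𝟙 A) (0 : A ⟶ 0) := by
  refine ⟨by simp, fun W g hg => ⟨g, by simp, fun h hh => by simpa using hh⟩⟩

lemma isKernelOf_zero_id [HasZeroObject C] (Q' : C) :
    IsKernelOf (0 : (0 : C) ⟶ Q') (𝟙 Q') := by
  refine ⟨by simp, fun W g hg => ?_⟩
  rw [Category.comp_id] at hg
  exact ⟨0, by simp [hg], fun h _ => (isZero_zero C).eq_of_tgt h 0⟩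

/-- If `q` is a cokernel of its kernel `i`, and `g` is also a kernel of `q`,
then `q` is a cokernel of `g`. -/
lemma isCokernelOf_of_isKernelOf {K A B Q' : C} {i : K ⟶ A} {q : A ⟶ Q'} {g : B ⟶ A}
    (hcoker : IsCokernelOf q i) (hg : IsKernelOf g q) :
    IsCokernelOf q g := by
  obtain ⟨h, hh, -⟩ := hg.2 i hcoker.1
  refine ⟨hg.1, fun W w hw => hcoker.2 w ?_⟩
  rw [← hh, Category.assoc, hw, comp_zero]

end Aux

/-- **Lemma 3.2.**  In a weakly exact category, if `f ≫ g` and `g` are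
inflations, then `f` is an inflation. -/
theorem inflation_of_comp {C : Type u} [Category.{v} C] [HasZeroMorphisms C]
    [HasZeroObject C] (D : MorphismProperty C) (hD : IsWeaklyExact D)
    {A B Q : C} (f : A ⟶ B) (g : B ⟶ Q)
    (hfg : IsInflation D (f ≫ g)) (hg : IsInflation D g) :
    IsInflation D f := by
  open ZeroObject in
  obtain ⟨P, p, hp, hker_fg⟩ := hfg
  obtain ⟨Q', q, hq, hker_g⟩ := hg
  -- `p` is a cokernel of `f ≫ g`
  obtain ⟨K₀, i₀, hi₀, hcoker₀⟩ := hD.defl_kernel p hp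
  have hcokp : IsCokernelOf p (f ≫ g) := isCokernelOf_of_isKernelOf hcoker₀ hker_fg
  -- factor `q` through `p`
  have hfgq : (f ≫ g) ≫ q = 0 := by rw [Category.assoc, hker_g.1, comp_zero]
  obtain ⟨t, ht, -⟩ := hcokp.2 q hfgq
  have hDt : D t := hD.defl_cancel p t (by rwa [ht]) hp
  obtain ⟨K, k, hk, -⟩ := hD.defl_kernel t hDt
  -- the induced map B ⟶ K
  have hgp : (g ≫ p) ≫ t = 0 := by rw [Category.assoc, ht, hker_g.1]
  obtain ⟨a₂, ha₂, -⟩ := hk.2 (g ≫ p) hgp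
  -- apply the 3×3 lemma
  have hse : IsShortExact D f a₂ := by
    refine hD.three_by_three f a₂ (f ≫ g) p (0 : (0 : C) ⟶ Q') (𝟙 Q')
      (𝟙 A) g k (0 : A ⟶ (0 : C)) q t ?_ ?_ ?_ ?_ ?_ ?_ ?_ ?_ ?_
    · simp
    · exact ha₂
    · simp [hfgq]
    · simp [ht]
    · exact ⟨hD.defl_to_zero _ (isZero_zero C), isKernelOf_id_to_zero A⟩
    · exact ⟨hq, hker_g⟩
    · exact ⟨hDt, hk⟩
    · exact ⟨hp, hker_fg⟩
    · exact ⟨hD.defl_of_isIso _ inferInstance, isKernelOf_zero_id Q'⟩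
  exact ⟨K, a₂, hse.1, hse.2⟩
end

section
/- In a weakly exact category, if A → B → C is a short exact sequence of differential objects and two of the three differential objects are exact (i.e. their cohomology is zero), then so is the third. -/
open CategoryTheory CategoryTheory.Limits

universe v u

section DiffObj

variable {C : Type u} [Category.{v} C] [HasZeroMorphisms C]

/-- A differential object `(A, d)` in a weakly exact category, with `d`
admissible (a deflation `e` onto the image `I` followed by an inflation `m`),
together with the canonical data computing its cohomology `H`: the cokernel
`c : A ⟶ CoA` of `m : I ⟶ A`, the induced (deflation) `t : CoA ⟶ I`
(characterised by `c ≫ t = e`), and `H` the kernel of `t`. -/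
structure DiffObjData (D : MorphismProperty C) where
  A : C
  d : A ⟶ A
  dd : d ≫ d = 0
  I : C
  e : A ⟶ I
  m : I ⟶ A
  fac : e ≫ m = d
  defl_e : D e
  infl_m : IsInflation D m
  CoA : C
  c : A ⟶ CoA
  coker : IsCokernelOf c m
  t : CoA ⟶ I
  ht : c ≫ t = e
  H : C
  k : H ⟶ CoA
  ker : IsKernelOf k t

/-- A morphism of differential objects, together with the induced morphisms
on the cokernels and on cohomology (each characterised by the corresponding
commutation relation, hence unique). -/
structure DiffHomData (D : MorphismProperty C) (X Y : DiffObjData D) where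
  u : X.A ⟶ Y.A
  comm : X.d ≫ u = u ≫ Y.d
  ubar : X.CoA ⟶ Y.CoA
  hubar : X.c ≫ ubar = u ≫ Y.c
  Hu : X.H ⟶ Y.H
  hHu : Hu ≫ Y.k = X.k ≫ ubar

end DiffObj

section Helpers

namespace WeaklyExactTools

variable {C : Type u} [Category.{v} C] [HasZeroMorphisms C] {D : MorphismProperty C}

theorem kmono {K A B : C} {i : K ⟶ A} {p : A ⟶ B} (h : IsKernelOf i p) : Mono i := by
  constructor
  intro W g g' hgg
  obtain ⟨f, hf, hun⟩ := h.2 (g ≫ i) (by rw [Category.assoc, h.1, comp_zero])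
  rw [hun g rfl, hun g' hgg.symm]

theorem cepi {A B Q : C} {q : B ⟶ Q} {i : A ⟶ B} (h : IsCokernelOf q i) : Epi q := by
  constructor
  intro W g g' hgg
  obtain ⟨f, hf, hun⟩ := h.2 (q ≫ g) (by rw [← Category.assoc, h.1, zero_comp])
  rw [hun g rfl, hun g' hgg.symm]

theorem isZero_of_mono_zero {K A : C} {i : K ⟶ A} (hm : Mono i) (h : i = 0) : IsZero K := by
  rw [IsZero.iff_id_eq_zero]
  exact hm.right_cancellation _ _ (by simp [h])

/-- transport a kernel along an iso on the source -/
theorem kernel_precomp_iso {K' K A B : C} {φ : K' ⟶ K} (hφ : IsIso φ) {i : K ⟶ A}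
    {p : A ⟶ B} (h : IsKernelOf i p) : IsKernelOf (φ ≫ i) p := by
  haveI := hφ
  refine ⟨by rw [Category.assoc, h.1, comp_zero], fun W g hg => ?_⟩
  obtain ⟨f, hf, hun⟩ := h.2 g hg
  refine ⟨f ≫ inv φ, by simp [hf], fun y hy => ?_⟩
  have : (y ≫ φ) ≫ i = g := by simpa using hy
  have := hun _ this
  rw [← this]; simp

/-- transport a kernel along an iso postcomposed on the deflation -/
theorem kernel_comp_iso_right {K A B B' : C} {i : K ⟶ A} {p : A ⟶ B}
    (h : IsKernelOf i p) {φ : B ⟶ B'} (hφ : IsIso φ) : IsKernelOf i (p ≫ φ) := by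
  haveI := hφ
  refine ⟨by rw [← Category.assoc, h.1, zero_comp], fun W g hg => ?_⟩
  apply h.2
  exact (cancel_mono φ).mp (by simpa using hg)

theorem coker_comp_iso {A B Q Q' : C} {q : B ⟶ Q} {i : A ⟶ B}
    (h : IsCokernelOf q i) {φ : Q ⟶ Q'} (hφ : IsIso φ) : IsCokernelOf (q ≫ φ) i := by
  haveI := hφ
  refine ⟨by rw [← Category.assoc, h.1, zero_comp], fun W g hg => ?_⟩
  obtain ⟨f, hf, hun⟩ := h.2 g hg
  refine ⟨inv φ ≫ f, by simp [hf], fun y hy => ?_⟩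
  have : q ≫ (φ ≫ y) = g := by simpa using hy
  have := hun _ this
  rw [← this]; simp

theorem coker_of_kernel_iso {A A' B Q : C} {q : B ⟶ Q} {i₀ : A' ⟶ B}
    (h : IsCokernelOf q i₀) {n : A ⟶ A'} (hn : IsIso n) {i : A ⟶ B} (hni : n ≫ i₀ = i) :
    IsCokernelOf q i := by
  haveI := hn
  refine ⟨by rw [← hni, Category.assoc, h.1, comp_zero], fun W g hg => ?_⟩
  apply h.2
  have : n ≫ (i₀ ≫ g) = 0 := by rw [← Category.assoc, hni, hg]
  calc i₀ ≫ g = inv n ≫ (n ≫ (i₀ ≫ g)) := by simp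
  _ = 0 := by rw [this, comp_zero]

theorem kernels_iso {K K' A B : C} {i : K ⟶ A} {i' : K' ⟶ A} {p : A ⟶ B}
    (h : IsKernelOf i p) (h' : IsKernelOf i' p) :
    ∃ φ : K ⟶ K', IsIso φ ∧ φ ≫ i' = i := by
  obtain ⟨φ, hφ, -⟩ := h'.2 i h.1
  obtain ⟨ψ, hψ, -⟩ := h.2 i' h'.1
  refine ⟨φ, ⟨ψ, ?_, ?_⟩, hφ⟩
  · exact (kmono h).right_cancellation _ _ (by rw [Category.assoc, hψ, hφ, Category.id_comp])
  · exact (kmono h').right_cancellation _ _ (by rw [Category.assoc, hφ, hψ, Category.id_comp])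

theorem cokernels_iso {A B Q Q' : C} {q : B ⟶ Q} {q' : B ⟶ Q'} {i : A ⟶ B}
    (h : IsCokernelOf q i) (h' : IsCokernelOf q' i) :
    ∃ φ : Q ⟶ Q', IsIso φ ∧ q ≫ φ = q' := by
  obtain ⟨φ, hφ, -⟩ := h.2 q' h'.1
  obtain ⟨ψ, hψ, -⟩ := h'.2 q h.1
  refine ⟨φ, ⟨ψ, ?_, ?_⟩, hφ⟩
  · exact (cepi h).left_cancellation _ _ (by rw [← Category.assoc, hφ, hψ, Category.comp_id])
  · exact (cepi h').left_cancellation _ _ (by rw [← Category.assoc, hψ, hφ, Category.comp_id])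

/-- a morphism that is simultaneously a kernel (of the same deflation) as another
kernel, compared by `n`, makes `n` an iso. -/
theorem kernel_compare_iso {I K A B : C} {m : I ⟶ A} {j : K ⟶ A} {p : A ⟶ B}
    (hm : IsKernelOf m p) (hj : IsKernelOf j p) {n : I ⟶ K} (hn : n ≫ j = m) : IsIso n := by
  obtain ⟨n', hn', -⟩ := hm.2 j hj.1
  refine ⟨n', ?_, ?_⟩
  · exact (kmono hm).right_cancellation _ _ (by rw [Category.assoc, hn', hn, Category.id_comp])
  · exact (kmono hj).right_cancellation _ _ (by rw [Category.assoc, hn, hn', Category.id_comp])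

theorem defl_epi (hD : IsWeaklyExact D) {A B : C} {p : A ⟶ B} (hp : D p) : Epi p := by
  obtain ⟨K, i, hi, hcok⟩ := hD.defl_kernel p hp
  exact cepi hcok

theorem ses_coker (hD : IsWeaklyExact D) {K A B : C} {i : K ⟶ A} {p : A ⟶ B}
    (h : IsShortExact D i p) : IsCokernelOf p i := by
  obtain ⟨K0, i0, hi0, hcok⟩ := hD.defl_kernel p h.1
  obtain ⟨φ, hφ, hφi⟩ := kernels_iso h.2 hi0
  exact coker_of_kernel_iso hcok hφ hφi

theorem ses_iso_of_zero_left (hD : IsWeaklyExact D) {K A B : C} {i : K ⟶ A} {p : A ⟶ B}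
    (h : IsShortExact D i p) (hK : IsZero K) : IsIso p := by
  have hcok := ses_coker hD h
  have hi0 : i = 0 := hK.eq_of_src i 0
  obtain ⟨s, hs, -⟩ := hcok.2 (𝟙 A) (by rw [hi0, zero_comp])
  refine ⟨s, hs, ?_⟩
  obtain ⟨f, hf, hun⟩ := hcok.2 p (by rw [hi0, zero_comp])
  have h1 : p ≫ (s ≫ p) = p := by rw [← Category.assoc, hs, Category.id_comp]
  exact (hun _ h1).trans (hun (𝟙 B) (Category.comp_id p)).symm

theorem ses_zero_of_iso_left (hD : IsWeaklyExact D) {K A B : C} {i : K ⟶ A} {p : A ⟶ B}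
    (h : IsShortExact D i p) (hi : IsIso i) : IsZero B := by
  haveI := hi
  have hp0 : p = 0 := by
    have := h.2.1
    calc p = inv i ≫ (i ≫ p) := by simp
    _ = 0 := by rw [this, comp_zero]
  have hepi := defl_epi hD h.1
  rw [IsZero.iff_id_eq_zero]
  exact hepi.left_cancellation _ _ (by rw [hp0, zero_comp, comp_zero])

theorem iso_of_mono_defl (hD : IsWeaklyExact D) {A B : C} {p : A ⟶ B} (hp : D p)
    (hm : Mono p) : IsIso p := by
  obtain ⟨K, i, hi, -⟩ := hD.defl_kernel p hp
  have : i = 0 := hm.right_cancellation _ _ (by rw [hi.1, zero_comp])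
  exact ses_iso_of_zero_left hD ⟨hp, hi⟩ (isZero_of_mono_zero (kmono hi) this)

theorem ses_id_zero (hD : IsWeaklyExact D) {X Z₀ : C} (hz : IsZero Z₀) :
    IsShortExact D (𝟙 X) (0 : X ⟶ Z₀) := by
  refine ⟨hD.defl_to_zero _ hz, by simp, fun W g hg => ⟨g, by simp, fun y hy => by simpa using hy⟩⟩

theorem ses_zero_id (hD : IsWeaklyExact D) {X Z₀ : C} (hz : IsZero Z₀) :
    IsShortExact D (0 : Z₀ ⟶ X) (𝟙 X) := by
  refine ⟨hD.defl_of_isIso _ inferInstance, by simp, fun W g hg => ?_⟩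
  have hg0 : g = 0 := by simpa using hg
  exact ⟨0, by simp [hg0], fun y hy => hz.eq_of_tgt y 0⟩

end WeaklyExactTools

end Helpers

section MainLemmas

set_option linter.unusedSectionVars false

namespace WeaklyExactTools

open ZeroObject

variable {C : Type u} [Category.{v} C] [HasZeroMorphisms C] [HasZeroObject C]
  {D : MorphismProperty C}

/-- Kernels of a composition of deflations: `ker p → ker (p ≫ q) → ker q` is
short exact. -/
theorem L1 (hD : IsWeaklyExact D) {A B E K L M : C} {p : A ⟶ B} {q : B ⟶ E}
    (hp : D p) (hq : D q) {i : K ⟶ A} (hi : IsKernelOf i p) {j : L ⟶ B}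
    (hj : IsKernelOf j q) {m : M ⟶ A} (hm : IsKernelOf m (p ≫ q)) :
    ∃ (a₁ : K ⟶ M) (a₂ : M ⟶ L), a₁ ≫ m = i ∧ a₂ ≫ j = m ≫ p ∧ IsShortExact D a₁ a₂ := by
  obtain ⟨a₁, ha₁, -⟩ := hm.2 i (by rw [← Category.assoc, hi.1, zero_comp])
  obtain ⟨a₂, ha₂, -⟩ := hj.2 (m ≫ p) (by rw [Category.assoc, hm.1])
  refine ⟨a₁, a₂, ha₁, ha₂, ?_⟩
  refine hD.three_by_three a₁ a₂ i p (0 : (0 : C) ⟶ E) (𝟙 E)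
    (𝟙 K) m j (0 : K ⟶ (0 : C)) (p ≫ q) q
    (by rw [ha₁, Category.id_comp]) (by rw [ha₂])
    (by rw [← Category.assoc, hi.1, zero_comp, zero_comp])
    (by rw [Category.comp_id])
    (ses_id_zero hD (isZero_zero C)) ⟨hD.defl_comp p q hp hq, hm⟩ ⟨hq, hj⟩
    ⟨hp, hi⟩ (ses_zero_id hD (isZero_zero C))

/-- "Lemma X": two short exact sequences crossing at `P`; if the cross
composite `μ ≫ β` is a deflation then so is `α ≫ χ`, and in fact one gets a
short exact sequence with the evident kernel. -/
theorem lemX (hD : IsWeaklyExact D) {A P I I' N L : C} {α : A ⟶ P} {β : P ⟶ I}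
    (h1 : IsShortExact D α β) {μ : I' ⟶ P} {χ : P ⟶ N} (h2 : IsShortExact D μ χ)
    (hcross : D (μ ≫ β)) {l : L ⟶ I'} (hl : IsKernelOf l (μ ≫ β))
    {γ : L ⟶ A} (hγ : γ ≫ α = l ≫ μ) : IsShortExact D γ (α ≫ χ) := by
  refine hD.three_by_three γ (α ≫ χ) μ χ (𝟙 I) (0 : I ⟶ (0 : C))
    l α (𝟙 N) (μ ≫ β) β (0 : N ⟶ (0 : C))
    hγ (by rw [Category.comp_id])
    (by rw [Category.comp_id])
    (by simp)
    ⟨hcross, hl⟩ h1 (ses_id_zero hD (isZero_zero C))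
    h2 (ses_id_zero hD (isZero_zero C))

variable (hD : IsWeaklyExact D)

theorem m_mono (O : DiffObjData D) : Mono O.m := by
  obtain ⟨Q, p, hp, hmp⟩ := O.infl_m
  exact kmono hmp

theorem m_e_zero (hD : IsWeaklyExact D) (O : DiffObjData D) : O.m ≫ O.e = 0 := by
  have he : Epi O.e := defl_epi hD O.defl_e
  have hm : Mono O.m := m_mono O
  have h0 : O.e ≫ ((O.m ≫ O.e) ≫ O.m) = O.e ≫ ((0 : O.I ⟶ O.I) ≫ O.m) := by
    have hdd : (O.e ≫ O.m) ≫ O.e ≫ O.m = 0 := by rw [O.fac]; exact O.dd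
    simp only [Category.assoc] at hdd ⊢
    rw [hdd, zero_comp, comp_zero]
  exact hm.right_cancellation _ _ (he.left_cancellation _ _ h0)

theorem ker_m_c (hD : IsWeaklyExact D) (O : DiffObjData D) :
    IsKernelOf O.m O.c ∧ D O.c := by
  obtain ⟨Q, p, hp, hmp⟩ := O.infl_m
  obtain ⟨K0, i0, hi0, hcok⟩ := hD.defl_kernel p hp
  obtain ⟨φ, hφiso, hφ⟩ := kernels_iso hmp hi0
  have hcokm : IsCokernelOf p O.m := coker_of_kernel_iso hcok hφiso hφ
  obtain ⟨ψ, hψiso, hψ⟩ := cokernels_iso hcokm O.coker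
  constructor
  · have := kernel_comp_iso_right hmp hψiso
    rwa [hψ] at this
  · rw [← hψ]; exact hD.defl_comp p ψ hp (hD.defl_of_isIso ψ hψiso)

theorem defl_t (hD : IsWeaklyExact D) (O : DiffObjData D) : D O.t :=
  hD.defl_cancel O.c O.t (by rw [O.ht]; exact O.defl_e) (ker_m_c hD O).2

theorem ses_kt (hD : IsWeaklyExact D) (O : DiffObjData D) : IsShortExact D O.k O.t :=
  ⟨defl_t hD O, O.ker⟩

theorem t_iso (hD : IsWeaklyExact D) (O : DiffObjData D) (h : IsZero O.H) : IsIso O.t :=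
  ses_iso_of_zero_left hD (ses_kt hD O) h

theorem ker_m_e (hD : IsWeaklyExact D) (O : DiffObjData D) (h : IsZero O.H) :
    IsKernelOf O.m O.e := by
  obtain ⟨Q, p, hp, hmp⟩ := O.infl_m
  obtain ⟨K0, i0, hi0, hcok⟩ := hD.defl_kernel p hp
  obtain ⟨φ, hφiso, hφ⟩ := kernels_iso hmp hi0
  have hcokm : IsCokernelOf p O.m := coker_of_kernel_iso hcok hφiso hφ
  have hcoke : IsCokernelOf O.e O.m := by
    have := coker_comp_iso O.coker (t_iso hD O h)
    rwa [O.ht] at this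
  obtain ⟨θ, hθiso, hθ⟩ := cokernels_iso hcokm hcoke
  have := kernel_comp_iso_right hmp hθiso
  rwa [hθ] at this

end WeaklyExactTools

end MainLemmas

section KeyLemma

namespace WeaklyExactTools

variable {C : Type u} [Category.{v} C] [HasZeroMorphisms C] [HasZeroObject C]
  {D : MorphismProperty C}

set_option maxHeartbeats 1000000 in
/-- Given a short exact sequence of differential objects, if either `H X = 0`
or both `H Y = 0` and `H Z = 0`, then the induced sequence on cohomology is
short exact. -/
theorem key (hD : IsWeaklyExact D) (X Y Z : DiffObjData D)
    (u : X.A ⟶ Y.A) (hu : X.d ≫ u = u ≫ Y.d)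
    (v : Y.A ⟶ Z.A) (hv : Y.d ≫ v = v ≫ Z.d)
    (hses : IsShortExact D u v)
    (hcase : IsZero X.H ∨ (IsZero Y.H ∧ IsZero Z.H)) :
    ∃ (Hu : X.H ⟶ Y.H) (Hv : Y.H ⟶ Z.H), IsShortExact D Hu Hv := by
  -- basic facts
  have hDv : D v := hses.1
  have hkeru : IsKernelOf u v := hses.2
  have monou : Mono u := kmono hkeru
  have monomX : Mono X.m := m_mono X
  have monomY : Mono Y.m := m_mono Y
  have monomZ : Mono Z.m := m_mono Z
  have hmcX := ker_m_c hD X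
  have hmcY := ker_m_c hD Y
  have hmcZ := ker_m_c hD Z
  have epieX : Epi X.e := defl_epi hD X.defl_e
  have epieY : Epi Y.e := defl_epi hD Y.defl_e
  have epicX : Epi X.c := defl_epi hD hmcX.2
  have epicY : Epi Y.c := defl_epi hD hmcY.2
  -- kernels of the e's
  obtain ⟨KX, jX, hjX, hcokeX⟩ := hD.defl_kernel X.e X.defl_e
  obtain ⟨KY, jY, hjY, hcokeY⟩ := hD.defl_kernel Y.e Y.defl_e
  obtain ⟨KZ, jZ, hjZ, hcokeZ⟩ := hD.defl_kernel Z.e Z.defl_e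
  -- induced map ui on the images
  have hjXu : jX ≫ (u ≫ Y.e) = 0 := by
    apply monomY.right_cancellation
    calc (jX ≫ u ≫ Y.e) ≫ Y.m = jX ≫ u ≫ Y.d := by
          rw [← Y.fac]; simp only [Category.assoc]
    _ = jX ≫ X.d ≫ u := by rw [← hu]
    _ = (jX ≫ X.e) ≫ X.m ≫ u := by rw [← X.fac]; simp only [Category.assoc]
    _ = 0 ≫ Y.m := by rw [hjX.1, zero_comp, zero_comp]
  obtain ⟨ui, hui, -⟩ := hcokeX.2 (u ≫ Y.e) hjXu
  have hui_m : ui ≫ Y.m = X.m ≫ u := by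
    apply epieX.left_cancellation
    rw [← Category.assoc, hui]
    simp only [Category.assoc]; rw [Y.fac, ← hu, ← X.fac]
    simp only [Category.assoc]
  -- induced map vi
  have hjYv : jY ≫ (v ≫ Z.e) = 0 := by
    apply monomZ.right_cancellation
    calc (jY ≫ v ≫ Z.e) ≫ Z.m = jY ≫ v ≫ Z.d := by
          rw [← Z.fac]; simp only [Category.assoc]
    _ = jY ≫ Y.d ≫ v := by rw [← hv]
    _ = (jY ≫ Y.e) ≫ Y.m ≫ v := by rw [← Y.fac]; simp only [Category.assoc]
    _ = 0 ≫ Z.m := by rw [hjY.1, zero_comp, zero_comp]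
  obtain ⟨vi, hvi, -⟩ := hcokeY.2 (v ≫ Z.e) hjYv
  have hvi_m : vi ≫ Z.m = Y.m ≫ v := by
    apply epieY.left_cancellation
    rw [← Category.assoc, hvi]
    simp only [Category.assoc]; rw [Z.fac, ← hv, ← Y.fac]
    simp only [Category.assoc]
  -- induced maps on the cokernels
  obtain ⟨ubar, hubar, -⟩ := X.coker.2 (u ≫ Y.c)
    (by rw [← Category.assoc, ← hui_m, Category.assoc, Y.coker.1, comp_zero])
  obtain ⟨vbar, hvbar, -⟩ := Y.coker.2 (v ≫ Z.c)
    (by rw [← Category.assoc, ← hvi_m, Category.assoc, Z.coker.1, comp_zero])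
  -- naturality of t
  have hubart : ubar ≫ Y.t = X.t ≫ ui := by
    apply epicX.left_cancellation
    rw [← Category.assoc, hubar, Category.assoc, Y.ht, ← Category.assoc, X.ht, hui]
  have hvbart : vbar ≫ Z.t = Y.t ≫ vi := by
    apply epicY.left_cancellation
    rw [← Category.assoc, hvbar, Category.assoc, Z.ht, ← Category.assoc, Y.ht, hvi]
  -- induced maps on cohomology
  obtain ⟨Hu, hHu, -⟩ := Y.ker.2 (X.k ≫ ubar)
    (by rw [Category.assoc, hubart, ← Category.assoc, X.ker.1, zero_comp])
  obtain ⟨Hv, hHv, -⟩ := Z.ker.2 (Y.k ≫ vbar)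
    (by rw [Category.assoc, hvbart, ← Category.assoc, Y.ker.1, zero_comp])
  -- vi and vbar are deflations
  have hDvi : D vi := hD.defl_cancel Y.e vi
    (by rw [hvi]; exact hD.defl_comp v Z.e hDv Z.defl_e) Y.defl_e
  have hDvbar : D vbar := hD.defl_cancel Y.c vbar
    (by rw [hvbar]; exact hD.defl_comp v Z.c hDv hmcZ.2) hmcY.2
  -- P' := ker (v ≫ Z.c)
  obtain ⟨P', π', hπ', -⟩ := hD.defl_kernel (v ≫ Z.c) (hD.defl_comp v Z.c hDv hmcZ.2)
  obtain ⟨α', β', hα', hβ', sesαβ'⟩ := L1 hD hDv hmcZ.2 hkeru hmcZ.1 hπ'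
  -- N := ker vbar
  obtain ⟨N, ν, hν, -⟩ := hD.defl_kernel vbar hDvbar
  have monoν : Mono ν := kmono hν
  have hπ'' : IsKernelOf π' (Y.c ≫ vbar) := by rw [hvbar]; exact hπ'
  obtain ⟨μ, χ, hμ, hχ, sesμχ⟩ := L1 hD hmcY.2 hDvbar hmcY.1 hν hπ''
  -- the cross composite μ ≫ β' equals vi
  have hcross : μ ≫ β' = vi := by
    apply monomZ.right_cancellation
    rw [Category.assoc, hβ', ← Category.assoc, hμ, hvi_m]
  -- J := ker vi, and γ : J ⟶ X.A
  obtain ⟨J, ξ, hξ, -⟩ := hD.defl_kernel vi hDvi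
  have monoξ : Mono ξ := kmono hξ
  obtain ⟨γ, hγ, -⟩ := sesαβ'.2.2 (ξ ≫ μ)
    (by rw [Category.assoc, hcross, hξ.1])
  have hξ' : IsKernelOf ξ (μ ≫ β') := by rw [hcross]; exact hξ
  have sesγ : IsShortExact D γ (α' ≫ χ) :=
    lemX hD sesαβ' sesμχ (by rw [hcross]; exact hDvi) hξ' hγ
  -- φ : X.CoA ⟶ N
  have huv : u ≫ v = 0 := hkeru.1
  obtain ⟨φ, hφ, -⟩ := hν.2 ubar (by
    apply epicX.left_cancellation
    rw [← Category.assoc, hubar, Category.assoc, hvbar, ← Category.assoc, huv,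
      zero_comp, comp_zero])
  have hcφ : X.c ≫ φ = α' ≫ χ := by
    apply monoν.right_cancellation
    rw [Category.assoc, hφ, hubar, Category.assoc, hχ, ← Category.assoc, hα']
  have hDφ : D φ := hD.defl_cancel X.c φ (by rw [hcφ]; exact sesγ.1) hmcX.2
  -- R := ker φ
  obtain ⟨R, r, hr, -⟩ := hD.defl_kernel φ hDφ
  have hγker : IsKernelOf γ (X.c ≫ φ) := by rw [hcφ]; exact sesγ.2
  obtain ⟨τ, ε, hτ, hε, sesτε⟩ := L1 hD hmcX.2 hDφ hmcX.1 hr hγker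
  -- In either case, R is a zero object.
  have hRzero : IsZero R := by
    rcases hcase with hX | ⟨hY, hZ⟩
    · -- X.H = 0 : use that t_X is iso
      have htX : IsIso X.t := t_iso hD X hX
      have monoui : Mono ui := by
        constructor
        intro W a b hab
        have h2 : (a ≫ X.m) ≫ u = (b ≫ X.m) ≫ u := by
          simp only [Category.assoc, ← hui_m]
          rw [← Category.assoc, ← Category.assoc, hab]
        exact monomX.right_cancellation _ _ (monou.right_cancellation _ _ h2)
      have hr1 : r ≫ ubar = 0 := by rw [← hφ, ← Category.assoc, hr.1, zero_comp]
      have hr2 : (r ≫ X.t) ≫ ui = 0 := by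
        rw [Category.assoc, ← hubart, ← Category.assoc, hr1, zero_comp]
      have hr3 : r ≫ X.t = 0 := monoui.right_cancellation _ _ (by rw [hr2, zero_comp])
      have hr4 : r = 0 := by
        haveI := htX
        exact (cancel_mono X.t).mp (by rw [hr3, zero_comp])
      exact isZero_of_mono_zero (kmono hr) hr4
    · -- Y.H = 0 and Z.H = 0
      -- n_Y and n_Z are isos
      obtain ⟨nY, hnY, -⟩ := hjY.2 Y.m (m_e_zero hD Y)
      obtain ⟨nZ, hnZ, -⟩ := hjZ.2 Z.m (m_e_zero hD Z)
      have hnYiso : IsIso nY := kernel_compare_iso (ker_m_e hD Y hY) hjY hnY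
      have hnZiso : IsIso nZ := kernel_compare_iso (ker_m_e hD Z hZ) hjZ hnZ
      -- P := ker (v ≫ Z.e)
      obtain ⟨P, π, hπ, -⟩ := hD.defl_kernel (v ≫ Z.e) (hD.defl_comp v Z.e hDv Z.defl_e)
      obtain ⟨α, β, hα, hβ, sesαβ⟩ := L1 hD hDv Z.defl_e hkeru hjZ hπ
      have hπ2 : IsKernelOf π (Y.e ≫ vi) := by rw [hvi]; exact hπ
      obtain ⟨ι, ρ, hι, hρ, sesιρ⟩ := L1 hD Y.defl_e hDvi hjY hξ hπ2
      -- vk : KY ⟶ KZ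
      obtain ⟨vk, hvk, -⟩ := hjZ.2 (jY ≫ v) (by rw [Category.assoc, hjYv])
      have monojZ : Mono jZ := kmono hjZ
      have hcross2 : ι ≫ β = vk := by
        apply monojZ.right_cancellation
        rw [Category.assoc, hβ, ← Category.assoc, hι, hvk]
      have natn : nY ≫ vk = vi ≫ nZ := by
        apply monojZ.right_cancellation
        rw [Category.assoc, hvk, ← Category.assoc, hnY, Category.assoc, hnZ, hvi_m]
      have hDvk : D vk := by
        have h1 : D (vi ≫ nZ) := hD.defl_comp vi nZ hDvi (hD.defl_of_isIso nZ hnZiso)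
        rw [← natn] at h1
        exact hD.defl_cancel nY vk h1 (hD.defl_of_isIso nY hnYiso)
      -- Lemma X on P : α ≫ ρ is a deflation
      have hDιβ : D (ι ≫ β) := by rw [hcross2]; exact hDvk
      obtain ⟨L2, l2, hl2, -⟩ := hD.defl_kernel (ι ≫ β) hDιβ
      obtain ⟨γ₂, hγ₂, -⟩ := sesαβ.2.2 (l2 ≫ ι) (by rw [Category.assoc, hl2.1])
      have sesX2 : IsShortExact D γ₂ (α ≫ ρ) := lemX hD sesαβ sesιρ hDιβ hl2 hγ₂
      -- τ ≫ ξ = ui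
      have hτξ : τ ≫ ξ = ui := by
        apply monomY.right_cancellation
        calc (τ ≫ ξ) ≫ Y.m = τ ≫ ξ ≫ μ ≫ π' := by rw [hμ, Category.assoc]
        _ = τ ≫ (ξ ≫ μ) ≫ π' := by simp only [Category.assoc]
        _ = τ ≫ (γ ≫ α') ≫ π' := by rw [hγ]
        _ = (τ ≫ γ) ≫ α' ≫ π' := by simp only [Category.assoc]
        _ = X.m ≫ u := by rw [hτ, hα']
        _ = ui ≫ Y.m := hui_m.symm
      -- X.e ≫ τ = α ≫ ρ
      have heτ : X.e ≫ τ = α ≫ ρ := by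
        apply monoξ.right_cancellation
        rw [Category.assoc, hτξ, hui, Category.assoc, hρ, ← Category.assoc, hα]
      have hDτ : D τ := hD.defl_cancel X.e τ (by rw [heτ]; exact sesX2.1) X.defl_e
      have monoτ : Mono τ := by
        constructor
        intro W a b hab
        have : a ≫ τ ≫ γ = b ≫ τ ≫ γ := by
          rw [← Category.assoc, ← Category.assoc, hab]
        rw [hτ] at this
        exact monomX.right_cancellation _ _ this
      have hτiso : IsIso τ := iso_of_mono_defl hD hDτ monoτ
      exact ses_zero_of_iso_left hD sesτε hτiso
  -- hence φ is an iso, and ubar is a kernel of vbar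
  have hφiso : IsIso φ := ses_iso_of_zero_left hD ⟨hDφ, hr⟩ hRzero
  have hkerubar : IsKernelOf ubar vbar := by
    have := kernel_precomp_iso hφiso hν
    rwa [hφ] at this
  have sesCo : IsShortExact D ubar vbar := ⟨hDvbar, hkerubar⟩
  -- Grid A : the sequence of images is short exact
  have sesI : IsShortExact D ui vi :=
    hD.three_by_three ui vi u v ubar vbar X.m Y.m Z.m X.c Y.c Z.c
      hui_m hvi_m hubar.symm hvbar.symm
      ⟨hmcX.2, hmcX.1⟩ ⟨hmcY.2, hmcY.1⟩ ⟨hmcZ.2, hmcZ.1⟩ hses sesCo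
  -- Grid C : the sequence on cohomology is short exact
  refine ⟨Hu, Hv, ?_⟩
  exact hD.three_by_three Hu Hv ubar vbar ui vi X.k Y.k Z.k X.t Y.t Z.t
    hHu hHv hubart hvbart
    (ses_kt hD X) (ses_kt hD Y) (ses_kt hD Z) sesCo sesI

end WeaklyExactTools

end KeyLemma

/-- **Corollary 6.5.**  If `A ⟶ B ⟶ Q` is a short exact sequence of
differential objects in a weakly exact category and two of the three
differential objects are exact (i.e. have zero cohomology), then so is the
third. -/
theorem two_of_three_exact {C : Type u} [Category.{v} C] [HasZeroMorphisms C]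
    [HasZeroObject C] (D : MorphismProperty C) (hD : IsWeaklyExact D)
    (X Y Z : DiffObjData D)
    (u : X.A ⟶ Y.A) (hu : X.d ≫ u = u ≫ Y.d)
    (v : Y.A ⟶ Z.A) (hv : Y.d ≫ v = v ≫ Z.d)
    (hses : IsShortExact D u v) :
    (IsZero X.H → IsZero Y.H → IsZero Z.H) ∧
    (IsZero X.H → IsZero Z.H → IsZero Y.H) ∧
    (IsZero Y.H → IsZero Z.H → IsZero X.H) := by
  refine ⟨?_, ?_, ?_⟩
  · -- X and Y exact ⇒ Z exact
    intro hX hY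
    obtain ⟨Hu, Hv, hses'⟩ :=
      WeaklyExactTools.key hD X Y Z u hu v hv hses (Or.inl hX)
    have hepi : Epi Hv := WeaklyExactTools.defl_epi hD hses'.1
    have h0 : Hv = 0 := hY.eq_of_src Hv 0
    rw [IsZero.iff_id_eq_zero]
    exact hepi.left_cancellation _ _ (by rw [h0, zero_comp, comp_zero])
  · -- X and Z exact ⇒ Y exact
    intro hX hZ
    obtain ⟨Hu, Hv, hses'⟩ :=
      WeaklyExactTools.key hD X Y Z u hu v hv hses (Or.inl hX)
    have hiso : IsIso Hv := WeaklyExactTools.ses_iso_of_zero_left hD hses' hX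
    exact hZ.of_iso (asIso Hv)
  · -- Y and Z exact ⇒ X exact
    intro hY hZ
    obtain ⟨Hu, Hv, hses'⟩ :=
      WeaklyExactTools.key hD X Y Z u hu v hv hses (Or.inr ⟨hY, hZ⟩)
    have hmono : Mono Hu := WeaklyExactTools.kmono hses'.2
    have h0 : Hu = 0 := hY.eq_of_tgt Hu 0
    rw [IsZero.iff_id_eq_zero]
    exact hmono.right_cancellation _ _ (by rw [h0, zero_comp, comp_zero])
end
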